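/- arXiv:1303.3704 — 4 statements merged into one kernel-verified Lean document; each statement's English description precedes it below -/
import Mathlib

section
/- Let κ be an infinite cardinal and ∂ a cardinal with κ < ∂ ≤ 2^κ, and let ⟨W_i : i < κ⟩ be a sequence of finite subsets of κ. Then there exist a symmetric function f : [∂]² → κ and a sequence ⟨<_i : i < κ⟩ of partial orders on ∂ such that: (c) for all ζ < ξ < ∂ and i < κ, if f(ζ,ξ) ∈ W_i then ζ <_i ξ or ξ <_i ζ; and (d) for every i < κ there is a partition ⟨I_{i,ρ} : ρ ∈ 2^{W_i}⟩ of ∂ so that ζ <_i ξ if and only if there are ρ, ν ∈ 2^{W_i} with ρ lexicographically below ν, ζ ∈ I_{i,ρ} and ξ ∈ I_{i,ν}. -/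
/-!
Fix an injection `η` of `∂` into `2^κ`. Let `f(α, β)` be the first coordinate at which
`η α` and `η β` differ, and let `<_i` compare the restrictions of `η α` and `η β` to `W_i`
lexicographically. If `f(α, β) ∈ W_i`, these restrictions agree below `f(α, β)` and differ
there, so `α` and `β` are `<_i`-comparable; the partition `I_{i,ρ}` consists of the fibres of
restriction to `W_i`.
-/

open Cardinal

universe u v

/-- `Depth⁺(α)`: the sup of `θ⁺` over all `θ` such that there is a strictly increasing
sequence of length `θ` in `α`. -/
noncomputable def DepthPlus (α : Type u) [Preorder α] : Cardinal.{u} :=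
  sSup {c | ∃ θ : Cardinal.{u}, c = Order.succ θ ∧ ∃ f : θ.ord.ToType → α, StrictMono f}

/-- `Depth(α)`: the sup of `θ` over all `θ` such that there is a strictly increasing
sequence of length `θ` in `α`. -/
noncomputable def DepthBA (α : Type u) [Preorder α] : Cardinal.{u} :=
  sSup {θ : Cardinal.{u} | ∃ f : θ.ord.ToType → α, StrictMono f}

/-- `Length⁺(α)`: the sup of `θ⁺` over all `θ` such that there is a subset of `α` of
cardinality `θ` linearly ordered by `≤`. -/
noncomputable def LengthPlus (α : Type u) [Preorder α] : Cardinal.{u} :=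
  sSup {c | ∃ θ : Cardinal.{u}, c = Order.succ θ ∧ ∃ A : Set α, #A = θ ∧ IsChain (· ≤ ·) A}

/-- there is a strictly increasing chain of length `θ` in `α`. -/
def HasChain (α : Type u) [Preorder α] (θ : Cardinal.{u}) : Prop :=
  ∃ f : θ.ord.ToType → α, StrictMono f

/-- A regular ultrafilter. -/
def Ultrafilter.IsRegular {ι : Type u} (D : Ultrafilter ι) : Prop :=
  ∃ W : ι → Finset ι, ∀ ζ : ι, {i | ζ ∈ W i} ∈ D

/-- The setoid of `D`-a.e. equality on a product. -/
def ultraSetoid {ι : Type u} (D : Ultrafilter ι) (T : ι → Type v) : Setoid (∀ i, T i) where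
  r g h := {i | g i = h i} ∈ D
  iseqv := by
    refine ⟨fun g => ?_, fun {g h} hgh => ?_, fun {g h k} h1 h2 => ?_⟩
    · have : {i | g i = g i} = Set.univ := by ext i; simp
      show {i | g i = g i} ∈ D
      rw [this]; exact Filter.univ_mem
    · exact Filter.mem_of_superset hgh fun i hi => (hi : g i = h i).symm
    · exact Filter.mem_of_superset (Filter.inter_mem h1 h2) fun i hi => hi.1.trans hi.2

/-- The ultraproduct `∏ B i / D`. -/
def UltraProd {ι : Type u} (D : Ultrafilter ι) (B : ι → Type v) : Type _ :=
  Quotient (ultraSetoid D B)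

/-- The class of `g` in the ultraproduct. -/
def UltraProd.mk {ι : Type u} (D : Ultrafilter ι) (B : ι → Type v) (g : ∀ i, B i) :
    UltraProd D B :=
  Quotient.mk (ultraSetoid D B) g

/-- The (partial) order of the Boolean ultraproduct. -/
instance UltraProd.instPartialOrder {ι : Type u} (D : Ultrafilter ι) (B : ι → Type v)
    [∀ i, PartialOrder (B i)] : PartialOrder (UltraProd D B) where
  le := Quotient.lift₂ (fun f g => {i | f i ≤ g i} ∈ D) (by
    intro f g f' g' hf hg
    have hf : {i | f i = f' i} ∈ D := hf
    have hg : {i | g i = g' i} ∈ D := hg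
    apply propext
    constructor
    · intro h
      refine Filter.mem_of_superset (Filter.inter_mem (Filter.inter_mem hf hg) h) ?_
      rintro i ⟨⟨h1, h2⟩, h3⟩
      simp only [Set.mem_setOf_eq] at *
      rw [← h1, ← h2]; exact h3
    · intro h
      refine Filter.mem_of_superset (Filter.inter_mem (Filter.inter_mem hf hg) h) ?_
      rintro i ⟨⟨h1, h2⟩, h3⟩
      simp only [Set.mem_setOf_eq] at *
      rw [h1, h2]; exact h3)
  le_refl := by
    refine Quotient.ind fun f => ?_
    show {i | f i ≤ f i} ∈ D
    have : {i | f i ≤ f i} = Set.univ := by ext i; simp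
    rw [this]; exact Filter.univ_mem
  le_trans := by
    refine Quotient.ind fun f => Quotient.ind fun g => Quotient.ind fun h => ?_
    intro h1 h2
    exact Filter.mem_of_superset (Filter.inter_mem h1 h2) fun i hi => le_trans hi.1 hi.2
  le_antisymm := by
    refine Quotient.ind fun f => Quotient.ind fun g => ?_
    intro h1 h2
    exact Quotient.sound (Filter.mem_of_superset (Filter.inter_mem h1 h2)
      fun i hi => le_antisymm hi.1 hi.2)

/-- The cardinality of the ultraproduct of a family of cardinals. -/
noncomputable def ultraprodCard {ι : Type u} (D : Ultrafilter ι) (lam : ι → Cardinal.{u}) :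
    Cardinal.{u} :=
  #(UltraProd D (fun i => (lam i).ord.ToType))

/-- Lexicographic order on two-valued functions: `ρ <lex ν` iff at the least point where
they differ, `ρ` is `false` and `ν` is `true`. -/
def lexLt {W : Type*} [LinearOrder W] (ρ ν : W → Bool) : Prop :=
  ∃ j, (∀ k, k < j → ρ k = ν k) ∧ ρ j < ν j

theorem lexLt_iff_toLex_lt {W : Type*} [LinearOrder W] {ρ ν : W → Bool} :
    lexLt ρ ν ↔ toLex ρ < toLex ν :=
  Iff.rfl

theorem lexLt_irrefl {W : Type*} [LinearOrder W] (ρ : W → Bool) : ¬ lexLt ρ ρ := by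
  rw [lexLt_iff_toLex_lt]
  exact lt_irrefl _

theorem lexLt_trans {W : Type*} [LinearOrder W] {ρ ν μ : W → Bool}
    (h₁ : lexLt ρ ν) (h₂ : lexLt ν μ) : lexLt ρ μ := by
  rw [lexLt_iff_toLex_lt] at *
  exact h₁.trans h₂

section FirstDiff

variable {K : Type*} [LinearOrder K] [WellFoundedLT K] [Nonempty K] {β : K → Type*}

open Classical in
/-- The least coordinate at which `x` and `y` differ (an arbitrary one if `x = y`). -/
noncomputable def firstDiff (x y : ∀ k, β k) : K :=
  if h : x = y then Classical.arbitrary K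
  else wellFounded_lt.min {k | x k ≠ y k} (Function.ne_iff.mp h)

theorem firstDiff_comm (x y : ∀ k, β k) : firstDiff x y = firstDiff y x := by
  by_cases h : x = y
  · rw [h]
  · simp only [firstDiff, dif_neg h, dif_neg (Ne.symm h)]
    congr 1
    ext k
    exact ne_comm

theorem apply_firstDiff_ne {x y : ∀ k, β k} (h : x ≠ y) :
    x (firstDiff x y) ≠ y (firstDiff x y) := by
  rw [firstDiff, dif_neg h]
  exact WellFounded.min_mem _ {k | x k ≠ y k} _

theorem eq_of_lt_firstDiff {x y : ∀ k, β k} {k : K} (hk : k < firstDiff x y) : x k = y k := by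
  by_cases h : x = y
  · rw [h]
  · rw [firstDiff, dif_neg h] at hk
    by_contra hne
    exact WellFounded.not_lt_min _ _ hne hk

theorem lexLt_or_lexLt_of_firstDiff_mem {W : Finset K} {x y : K → Bool}
    (h : x ≠ y) (hW : firstDiff x y ∈ W) :
    lexLt (fun j : W => x j) (fun j => y j) ∨ lexLt (fun j : W => y j) (fun j => x j) := by
  have hbelow : ∀ j : W, j < ⟨firstDiff x y, hW⟩ → x j = y j :=
    fun j hj => eq_of_lt_firstDiff (Subtype.coe_lt_coe.mpr hj)
  rcases (apply_firstDiff_ne h).lt_or_gt with hlt | hgt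
  · exact Or.inl ⟨⟨_, hW⟩, hbelow, hlt⟩
  · exact Or.inr ⟨⟨_, hW⟩, fun j hj => (hbelow j hj).symm, hgt⟩

end FirstDiff

theorem exists_fiber_partition {α β : Type*} (g : α → β) (r : β → β → Prop) :
    ∃ I : β → Set α, (∀ ρ ν, ρ ≠ ν → Disjoint (I ρ) (I ν)) ∧ (⋃ ρ, I ρ) = Set.univ ∧
      ∀ a b, r (g a) (g b) ↔ ∃ ρ ν, r ρ ν ∧ a ∈ I ρ ∧ b ∈ I ν := by
  refine ⟨fun ρ => g ⁻¹' {ρ}, fun ρ ν h => (Set.disjoint_singleton.mpr h).preimage g,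
    Set.eq_univ_of_forall fun a => Set.mem_iUnion.mpr ⟨g a, rfl⟩, fun a b => ?_⟩
  constructor
  · exact fun h => ⟨g a, g b, h, rfl, rfl⟩
  · rintro ⟨ρ, ν, h, rfl, rfl⟩
    exact h

theorem stmt0_general (κ p : Cardinal.{0}) (hκ : ℵ₀ ≤ κ) (h2 : p ≤ 2 ^ κ)
    (W : κ.ord.ToType → Finset κ.ord.ToType) :
    ∃ (f : p.ord.ToType → p.ord.ToType → κ.ord.ToType)
      (lt : κ.ord.ToType → p.ord.ToType → p.ord.ToType → Prop),
      (∀ a b, f a b = f b a) ∧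
      (∀ i a, ¬ lt i a a) ∧
      (∀ i a b c, lt i a b → lt i b c → lt i a c) ∧
      (∀ i a b, a ≠ b → f a b ∈ W i → lt i a b ∨ lt i b a) ∧
      (∀ i : κ.ord.ToType, ∃ I : (({j // j ∈ W i}) → Bool) → Set p.ord.ToType,
        (∀ ρ ν, ρ ≠ ν → Disjoint (I ρ) (I ν)) ∧
        (⋃ ρ, I ρ) = Set.univ ∧
        (∀ a b, lt i a b ↔ ∃ ρ ν, lexLt ρ ν ∧ a ∈ I ρ ∧ b ∈ I ν)) := by
  obtain ⟨η⟩ : Nonempty (p.ord.ToType ↪ (κ.ord.ToType → Bool)) := by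
    rw [← Cardinal.le_def, ← Cardinal.power_def, mk_bool, mk_ord_toType, mk_ord_toType]
    exact h2
  have : Nonempty κ.ord.ToType := by
    rw [Ordinal.nonempty_toType_iff, Ne, ord_eq_zero]
    exact (aleph0_pos.trans_le hκ).ne'
  exact ⟨fun a b => firstDiff (η a) (η b),
    fun i a b => lexLt (fun j : W i => η a j) (fun j => η b j),
    fun a b => firstDiff_comm _ _, fun i a => lexLt_irrefl _, fun i a b c => lexLt_trans,
    fun i a b hab hW => lexLt_or_lexLt_of_firstDiff_mem (η.injective.ne hab) hW,
    fun i => exists_fiber_partition (fun a (j : W i) => η a j) lexLt⟩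

theorem stmt0 (κ p : Cardinal.{0}) (hκ : ℵ₀ ≤ κ) (h1 : κ < p) (h2 : p ≤ 2 ^ κ)
    (W : κ.ord.ToType → Finset κ.ord.ToType) :
    ∃ (f : p.ord.ToType → p.ord.ToType → κ.ord.ToType)
      (lt : κ.ord.ToType → p.ord.ToType → p.ord.ToType → Prop),
      (∀ a b, f a b = f b a) ∧
      (∀ i a, ¬ lt i a a) ∧
      (∀ i a b c, lt i a b → lt i b c → lt i a c) ∧
      (∀ i a b, a ≠ b → f a b ∈ W i → lt i a b ∨ lt i b a) ∧
      (∀ i : κ.ord.ToType, ∃ I : (({j // j ∈ W i}) → Bool) → Set p.ord.ToType,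
        (∀ ρ ν, ρ ≠ ν → Disjoint (I ρ) (I ν)) ∧
        (⋃ ρ, I ρ) = Set.univ ∧
        (∀ a b, lt i a b ↔ ∃ ρ ν, lexLt ρ ν ∧ a ∈ I ρ ∧ b ∈ I ν)) :=
  stmt0_general κ p hκ h2 W
end

section
/- Let λ be a singular cardinal with uncountable cofinality ∂ = cf(λ) > ℵ₀, and let ⟨u_α : α < λ⟩ be a family of finite sets. Let ⟨θ_ε : ε < ∂⟩ be an increasing continuous sequence of cardinals cofinal in λ with θ₀ = 0, θ₁ > ∂, and each θ_{ε+1} regular. Then there exist B ⊆ λ with |B| = λ, an unbounded T ⊆ ∂, finite sets r_ε (for ε ∈ T) and a finite set r_* such that: (a) for γ₀ < γ₁ both in B ∩ [θ_ε, θ_{ε+1}) with ε ∈ T, u_{γ₀} ∩ u_{γ₁} = r_ε; (b) for γ₀ ∈ B ∩ [θ_ε, θ_{ε+1}) and γ₁ ∈ B ∩ [θ_ζ, θ_{ζ+1}) with ε < ζ in T, u_{γ₀} ∩ u_{γ₁} = r_*; (c) r_{ε₀} ∩ r_{ε₁} = r_* for ε₀ < ε₁ in T; and (d) |B ∩ [θ_ε,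 θ_{ε+1})| = θ_{ε+1} for every ε ∈ T. -/
open Cardinal

universe u v

/-!
Apply the Δ-system lemma for the regular cardinal `θ (ε + 1)` inside every block
`[θ ε, θ (ε + 1))`, obtaining `B₀ ε` with root `r₀ ε`. For `ε ≥ 1`, the set `S ε` of points of all
`u γ` and `r₀ γ` with `γ < θ ε` contains the sets of all earlier blocks and (as `d < θ ε`) all
roots, and has at most `θ ε` elements. As the sets of `B₀ ε` are pairwise disjoint off the root,
fewer than `θ (ε + 1)` of them meet `S ε` outside `r₀ ε`; discarding those makes the intersection
of two sets from blocks `ζ < ε` equal to `r₀ ζ ∩ r₀ ε`. Finally, `cf λ` is regular, so the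
Δ-system lemma applied to the roots yields the unbounded set `T` of blocks and the root `r_*`.
-/
open Set

universe w

theorem Cardinal.mk_biUnion_finset_lt {ι β : Type*} {κ : Cardinal} (hκ : ℵ₀ ≤ κ) (s : Finset ι)
    (t : ι → Set β) (ht : ∀ i ∈ s, #(t i) < κ) : #(⋃ i ∈ s, t i) < κ := by
  classical
  induction s using Finset.induction_on with
  | empty => simpa using aleph0_pos.trans_le hκ
  | insert a s _ ih =>
    rw [Finset.set_biUnion_insert]
    exact (mk_union_le _ _).trans_lt <| add_lt_of_lt hκ (ht a (Finset.mem_insert_self a s))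
      (ih fun i hi => ht i (Finset.mem_insert_of_mem hi))

theorem Cardinal.lift_mk_biUnion_finset_le {α : Type w} {ι : Type v} (s : Set ι)
    (f : ι → Finset α) : lift.{v} #(⋃ i ∈ s, (f i : Set α)) ≤ lift.{w} #s * ℵ₀ :=
  (mk_biUnion_le_lift _ s).trans <| mul_le_mul_right (ciSup_le' fun i => by simp) _

theorem Cardinal.exists_pairwise_of_mk_lt {β : Type*} {R : β → β → Prop} [Std.Symm R]
    {κ : Cardinal} (hκ : κ.IsRegular) {A : Set β} (hA : κ ≤ #A)
    (hR : ∀ i ∈ A, #{j ∈ A | ¬ R i j} < κ) : ∃ B ⊆ A, κ ≤ #B ∧ B.Pairwise R := by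
  obtain ⟨B, ⟨hBA, hBR⟩, hBmax⟩ := zorn_subset {B | B ⊆ A ∧ B.Pairwise R} fun c hc hchain =>
    ⟨⋃₀ c, ⟨sUnion_subset fun s hs => (hc hs).1, hchain.pairwise_sUnion.2 fun s hs => (hc hs).2⟩,
      fun _ => subset_sUnion_of_mem⟩
  refine ⟨B, hBA, not_lt.1 fun hB => ?_, hBR⟩
  -- by maximality, every `j ∈ A` outside `B` is in conflict with some member of `B`
  have hcover : A ⊆ B ∪ ⋃ i ∈ B, {j ∈ A | ¬ R i j} := by
    intro j hj
    by_contra hcon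
    simp only [mem_union, mem_iUnion, mem_ofPred_eq, not_or, not_exists, hj, true_and,
      not_not] at hcon
    have hins : insert j B ⊆ A ∧ (insert j B).Pairwise R :=
      ⟨insert_subset hj hBA,
        pairwise_insert_of_symm.2 ⟨hBR, fun i hi _ => Std.Symm.symm _ _ (hcon.2 i hi)⟩⟩
    exact hcon.1 (hBmax hins (subset_insert j B) (mem_insert j B))
  have hsmall : #(B ∪ ⋃ i ∈ B, {j ∈ A | ¬ R i j} : Set β) < κ :=
    (mk_union_le _ _).trans_lt <| add_lt_of_lt hκ.aleph0_le hB <|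
      (card_biUnion_lt_iff_forall_of_isRegular hκ hB).2 fun i hi => hR i (hBA hi)
  exact (hA.trans (mk_le_mk_of_subset hcover)).not_gt hsmall

theorem Cardinal.mk_Ico_ord {a b : Cardinal.{w}} (hab : a < b) (hb : ℵ₀ ≤ b) :
    #(Ico a.ord b.ord) = lift.{w + 1} b := by
  have hsplit : Iio b.ord = Iio a.ord ∪ Ico a.ord b.ord := by
    rw [Iio_union_Ico_eq_Iio (ord_le_ord.2 hab.le)]
  have hle : #(Ico a.ord b.ord) ≤ lift.{w + 1} b := by
    simpa [mk_Iio_ordinal] using mk_le_mk_of_subset (Ico_subset_Iio_self (a := a.ord) (b := b.ord))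
  refine hle.antisymm (not_lt.1 fun hlt => ?_)
  have := (mk_union_le (Iio a.ord) (Ico a.ord b.ord)).trans_lt
    (add_lt_of_lt (by simpa using hb) (by simpa [mk_Iio_ordinal] using hab) hlt)
  simp [← hsplit, mk_Iio_ordinal] at this

theorem Ordinal.exists_mem_le_of_lift_le_mk {c : Cardinal.{w}} {T : Set Ordinal.{w}}
    (hT : Cardinal.lift.{w + 1} c ≤ #T) {ε : Ordinal.{w}} (hε : ε < c.ord) : ∃ ζ ∈ T, ε ≤ ζ := by
  by_contra! hbdd
  have hTε : #T ≤ Cardinal.lift.{w + 1} ε.card :=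
    (mk_le_mk_of_subset (fun ζ hζ => hbdd ζ hζ : T ⊆ Iio ε)).trans_eq (Cardinal.mk_Iio_ordinal ε)
  exact (hT.trans hTε).not_gt (Cardinal.lift_lt.2 (Cardinal.lt_ord.1 hε))

theorem MonotoneOn.apply_add_one_le {β : Type*} [Preorder β] {o : Ordinal} {f : Ordinal → β}
    (hf : MonotoneOn f (Iio o)) {ζ ε : Ordinal} (hε : ε < o) (h : ζ < ε) : f (ζ + 1) ≤ f ε :=
  hf ((Order.add_one_le_of_lt h).trans_lt hε) hε (Order.add_one_le_of_lt h)

theorem MonotoneOn.pairwiseDisjoint_Ico_ord {o : Ordinal.{w}} {θ : Ordinal.{w} → Cardinal.{w}}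
    (hθ : MonotoneOn θ (Iio o)) :
    (Iio o).PairwiseDisjoint fun ε => Ico (θ ε).ord (θ (ε + 1)).ord := by
  have hlt : ∀ ζ ε, ε < o → ζ < ε →
      Disjoint (Ico (θ ζ).ord (θ (ζ + 1)).ord) (Ico (θ ε).ord (θ (ε + 1)).ord) :=
    fun ζ ε hε h => disjoint_left.2 fun _ hx₀ hx₁ =>
      (hx₀.2.trans_le (ord_le_ord.2 (hθ.apply_add_one_le hε h))).not_ge hx₁.1
  intro ζ hζ ε hε hne
  rcases hne.lt_or_gt with h | h
  exacts [hlt ζ ε hε h, (hlt ε ζ hζ h).symm]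

theorem Set.PairwiseDisjoint.biUnion_inter_eq {ι β : Type*} {T : Set ι} {I B : ι → Set β}
    (hI : T.PairwiseDisjoint I) (hB : ∀ ζ ∈ T, B ζ ⊆ I ζ) {ε : ι} (hε : ε ∈ T) :
    (⋃ ζ ∈ T, B ζ) ∩ I ε = B ε := by
  ext γ
  refine ⟨fun ⟨hγ, hγε⟩ => ?_, fun hγ => ⟨mem_biUnion hε hγ, hB ε hε hγ⟩⟩
  obtain ⟨ζ, hζ, hγζ⟩ := mem_iUnion₂.1 hγ
  obtain rfl := hI.elim_set hζ hε γ (hB ζ hζ hγζ) hγε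
  exact hγζ

section DeltaSystem

variable {α : Type w} {β : Type v} [DecidableEq α]

def IsDeltaSystem (u : β → Finset α) (s : Set β) (r : Finset α) : Prop :=
  s.Pairwise fun i j => u i ∩ u j = r

variable {u : β → Finset α} {s t : Set β} {r : Finset α}

theorem IsDeltaSystem.mono (h : IsDeltaSystem u s r) (hts : t ⊆ s) : IsDeltaSystem u t r :=
  Set.Pairwise.mono hts h

theorem IsDeltaSystem.root_subset (h : IsDeltaSystem u s r) (hs : s.Nontrivial) {i : β}
    (hi : i ∈ s) : r ⊆ u i := by
  obtain ⟨j, hj, hji⟩ := hs.exists_ne i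
  rw [← h hi hj hji.symm]
  exact Finset.inter_subset_left

theorem exists_isDeltaSystem_of_card_le {κ : Cardinal.{v}} (hκ : κ.IsRegular) (n : ℕ) :
    ∀ (u : β → Finset α) (A : Set β), (∀ i ∈ A, (u i).card ≤ n) → κ ≤ #A →
      ∃ B ⊆ A, κ ≤ #B ∧ ∃ r, IsDeltaSystem u B r := by
  induction n with
  | zero =>
    intro u A hu hA
    refine ⟨A, subset_rfl, hA, ∅, fun i hi j _ _ => ?_⟩
    simp [Finset.card_eq_zero.1 (Nat.le_zero.1 (hu i hi))]
  | succ n ih =>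
    intro u A hu hA
    by_cases hpop : ∃ a, κ ≤ #{i ∈ A | a ∈ u i}
    · obtain ⟨a, ha⟩ := hpop
      obtain ⟨B, hBA, hB, r, hr⟩ := ih (fun i => (u i).erase a) _ (fun i hi => by
        rw [Finset.card_erase_of_mem hi.2]; exact Nat.sub_le_of_le_add (hu i hi.1)) ha
      refine ⟨B, hBA.trans (sep_subset _ _), hB, insert a r, fun i hi j hj hij => ?_⟩
      rw [← hr hi hj hij, Finset.erase_inter, Finset.inter_erase, Finset.erase_idem,
        Finset.insert_erase (Finset.mem_inter.2 ⟨(hBA hi).2, (hBA hj).2⟩)]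
    · push Not at hpop
      -- a member meeting `u i` contains one of the finitely many points of `u i`
      have hconflict : ∀ i ∈ A, #{j ∈ A | ¬ Disjoint (u i) (u j)} < κ := fun i _ =>
        (mk_le_mk_of_subset fun j hj => by
          obtain ⟨a, hai, haj⟩ := Finset.not_disjoint_iff.1 hj.2
          exact mem_biUnion hai ⟨hj.1, haj⟩).trans_lt
        (mk_biUnion_finset_lt hκ.aleph0_le (u i) (fun a => {j ∈ A | a ∈ u j}) fun a _ => hpop a)
      have : Std.Symm (Function.onFun Disjoint u) := ⟨fun _ _ h => h.symm⟩
      obtain ⟨B, hBA, hB, hBdisj⟩ := exists_pairwise_of_mk_lt hκ hA hconflict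
      exact ⟨B, hBA, hB, ∅, hBdisj.mono' fun i j h => Finset.disjoint_iff_inter_eq_empty.1 h⟩

theorem exists_isDeltaSystem {κ : Cardinal.{v}} (hκ : κ.IsRegular) (hκ₀ : ℵ₀ < κ)
    (u : β → Finset α) {A : Set β} (hA : κ ≤ #A) :
    ∃ B ⊆ A, #B = κ ∧ ∃ r, IsDeltaSystem u B r := by
  obtain ⟨⟨n⟩, A', hA'A, hA', hn⟩ := infinite_pigeonhole_set
    (fun i : A => ULift.up.{v} (u i).card) κ hA hκ.aleph0_le (by simpa [hκ.cof_ord] using hκ₀)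
  obtain ⟨B, hBA', hB, r, hr⟩ := exists_isDeltaSystem_of_card_le hκ n u A'
    (fun i hi => (congrArg ULift.down (hn hi)).le) hA'
  obtain ⟨B', hB'B, hB'⟩ := le_mk_iff_exists_subset.1 hB
  exact ⟨B', (hB'B.trans hBA').trans hA'A, hB', r, hr.mono hB'B⟩

theorem IsDeltaSystem.lift_mk_not_subset_le (h : IsDeltaSystem u s r) (S : Set α) :
    lift.{w} #{i ∈ s | ¬ ↑(u i) ∩ S ⊆ (r : Set α)} ≤ lift.{v} #S := by
  have hwitness : ∀ i : {i ∈ s | ¬ ↑(u i) ∩ S ⊆ (r : Set α)}, ∃ x ∈ S, x ∈ u i ∧ x ∉ r := by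
    rintro ⟨i, -, hi⟩
    obtain ⟨x, ⟨hxu, hxS⟩, hxr⟩ := not_subset.1 hi
    exact ⟨x, hxS, hxu, hxr⟩
  choose w hwS hwu hwr using hwitness
  -- members outside the root are pairwise disjoint, so they cannot share a witness
  refine lift_mk_le'.2 ⟨⟨fun i => ⟨w i, hwS i⟩, fun i j hij => ?_⟩⟩
  by_contra hne
  have hw : w i = w j := congrArg Subtype.val hij
  apply hwr i
  rw [← h i.2.1 j.2.1 (Subtype.coe_ne_coe.2 hne)]
  exact Finset.mem_inter.2 ⟨hwu i, hw ▸ hwu j⟩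

theorem IsDeltaSystem.mk_sep_subset_eq (h : IsDeltaSystem u s r) (hs : ℵ₀ ≤ #s) {S : Set α}
    (hS : lift.{v} #S < lift.{w} #s) : #{i ∈ s | ↑(u i) ∩ S ⊆ (r : Set α)} = #s := by
  refine (mk_le_mk_of_subset (sep_subset _ _)).antisymm (not_lt.1 fun hlt => ?_)
  have hbad : #{i ∈ s | ¬ ↑(u i) ∩ S ⊆ (r : Set α)} < #s :=
    lift_lt.1 ((h.lift_mk_not_subset_le S).trans_lt hS)
  have hcover :
      s ⊆ {i ∈ s | ↑(u i) ∩ S ⊆ (r : Set α)} ∪ {i ∈ s | ¬ ↑(u i) ∩ S ⊆ (r : Set α)} :=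
    fun i hi => (em _).imp (⟨hi, ·⟩) (⟨hi, ·⟩)
  exact ((mk_le_mk_of_subset hcover).trans (mk_union_le _ _)).not_gt (add_lt_of_lt hs hlt hbad)

theorem exists_thinning_inter_eq_inter_roots {ι : Type*} [LinearOrder ι] {D : Set ι}
    {B : ι → Set β} {r : ι → Finset α} (hB : ∀ ε ∈ D, IsDeltaSystem u (B ε) (r ε))
    (hB₀ : ∀ ε ∈ D, ℵ₀ ≤ #(B ε)) (S : ι → Set α)
    (hS_mem : ∀ ζ ∈ D, ∀ ε ∈ D, ζ < ε → ∀ γ ∈ B ζ, ↑(u γ) ⊆ S ε)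
    (hS_root : ∀ ζ ∈ D, ∀ ε ∈ D, ζ < ε → ↑(r ε) ⊆ S ζ)
    (hS : ∀ ε ∈ D, lift.{v} #(S ε) < lift.{w} #(B ε)) :
    ∃ B' : ι → Set β, (∀ ε ∈ D, B' ε ⊆ B ε ∧ #(B' ε) = #(B ε)) ∧
      ∀ ζ ∈ D, ∀ ε ∈ D, ζ < ε → ∀ γ₀ ∈ B' ζ, ∀ γ₁ ∈ B' ε, u γ₀ ∩ u γ₁ = r ζ ∩ r ε := by
  refine ⟨fun ε => {γ ∈ B ε | ↑(u γ) ∩ S ε ⊆ (r ε : Set α)}, fun ε hε =>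
    ⟨sep_subset _ _, (hB ε hε).mk_sep_subset_eq (hB₀ ε hε) (hS ε hε)⟩, ?_⟩
  rintro ζ hζ ε hε hζε γ₀ ⟨hγ₀, h₀⟩ γ₁ ⟨hγ₁, h₁⟩
  have hnontrivial : ∀ ε ∈ D, (B ε).Nontrivial := fun ε hε =>
    (infinite_coe_iff.1 (infinite_iff.2 (hB₀ ε hε))).nontrivial
  refine Finset.Subset.antisymm (fun x hx => ?_) (Finset.inter_subset_inter
    ((hB ζ hζ).root_subset (hnontrivial ζ hζ) hγ₀) ((hB ε hε).root_subset (hnontrivial ε hε) hγ₁))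
  obtain ⟨hx₀, hx₁⟩ := Finset.mem_inter.1 hx
  have hxε : x ∈ r ε := h₁ ⟨hx₁, hS_mem ζ hζ ε hε hζε γ₀ hγ₀ hx₀⟩
  exact Finset.mem_inter.2 ⟨h₀ ⟨hx₀, hS_root ζ hζ ε hε hζε hxε⟩, hxε⟩

end DeltaSystem

theorem exists_deltaSystem_blocks {α : Type w} [DecidableEq α] {d : Cardinal.{w}}
    {θ : Ordinal.{w} → Cardinal.{w}} (hd : ℵ₀ < d) (hdreg : d.IsRegular)
    (u : Ordinal.{w} → Finset α) (hmono : StrictMonoOn θ (Iio d.ord)) (h1 : d < θ 1)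
    (hreg : ∀ ε < d.ord, (θ (ε + 1)).IsRegular) :
    ∃ (T : Set Ordinal.{w}) (B : Ordinal.{w} → Set Ordinal.{w}) (r : Ordinal.{w} → Finset α)
      (rs : Finset α), T ⊆ Iio d.ord ∧ #T = lift.{w + 1} d ∧
      (∀ ε ∈ T, B ε ⊆ Ico (θ ε).ord (θ (ε + 1)).ord ∧ #(B ε) = lift.{w + 1} (θ (ε + 1)) ∧
        IsDeltaSystem u (B ε) (r ε)) ∧
      (∀ ζ ∈ T, ∀ ε ∈ T, ζ < ε → ∀ γ₀ ∈ B ζ, ∀ γ₁ ∈ B ε, u γ₀ ∩ u γ₁ = rs) ∧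
      IsDeltaSystem r T rs := by
  have hsucc : ∀ ε < d.ord, ε + 1 < d.ord := fun ε => (isSuccLimit_ord hd.le).add_one_lt
  have hθsucc : ∀ ε < d.ord, θ ε < θ (ε + 1) := fun ε hε => hmono hε (hsucc ε hε) (lt_add_one ε)
  have hdθ : ∀ ε < d.ord, 1 ≤ ε → d < θ ε := fun ε hε hε1 =>
    h1.trans_le (hmono.monotoneOn (hε1.trans_lt hε) hε hε1)
  have hθ₀ : ∀ ε < d.ord, ℵ₀ < θ (ε + 1) := fun ε hε => hd.trans (hdθ _ (hsucc ε hε) le_add_self)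
  have hblock : ∀ ε < d.ord, ∃ B ⊆ Ico (θ ε).ord (θ (ε + 1)).ord,
      #B = lift.{w + 1} (θ (ε + 1)) ∧ ∃ r, IsDeltaSystem u B r := fun ε hε =>
    exists_isDeltaSystem (hreg ε hε).lift (by simpa using hθ₀ ε hε) u
      (mk_Ico_ord (hθsucc ε hε) (hθ₀ ε hε).le).ge
  choose! B₀ hB₀I hB₀ r₀ hr₀ using hblock
  let S : Ordinal.{w} → Set α := fun ε => ⋃ γ ∈ Iio (θ ε).ord, ↑(u γ ∪ r₀ γ)
  have hS_mem : ∀ ζ ∈ Ico 1 d.ord, ∀ ε ∈ Ico 1 d.ord, ζ < ε → ∀ γ ∈ B₀ ζ, ↑(u γ) ⊆ S ε :=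
    fun ζ hζ ε hε hζε γ hγ x hx => mem_biUnion
      ((hB₀I ζ hζ.2 hγ).2.trans_le (ord_le_ord.2 (hmono.monotoneOn.apply_add_one_le hε.2 hζε)))
      (Finset.mem_coe.2 (Finset.mem_union_left _ hx))
  have hS_root : ∀ ζ ∈ Ico 1 d.ord, ∀ ε ∈ Ico 1 d.ord, ζ < ε → ↑(r₀ ε) ⊆ S ζ :=
    fun ζ hζ ε hε _ x hx => mem_biUnion (hε.2.trans_le (ord_le_ord.2 (hdθ ζ hζ.2 hζ.1).le))
      (Finset.mem_coe.2 (Finset.mem_union_right _ hx))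
  have hS : ∀ ε ∈ Ico 1 d.ord, lift.{w + 1} #(S ε) < lift.{w} #(B₀ ε) := fun ε hε =>
    calc lift.{w + 1} #(S ε) ≤ lift.{w} #(Iio (θ ε).ord) * ℵ₀ := lift_mk_biUnion_finset_le _ _
      _ = lift.{w + 1} (θ ε) := by
        simp [mk_Iio_ordinal, mul_aleph0_eq (aleph0_le_lift.2 (hd.trans (hdθ ε hε.2 hε.1)).le)]
      _ < lift.{w + 1} (θ (ε + 1)) := lift_lt.2 (hθsucc ε hε.2)
      _ = lift.{w} #(B₀ ε) := by simp [hB₀ ε hε.2]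
  obtain ⟨B, hBB₀, hcross⟩ := exists_thinning_inter_eq_inter_roots (fun ε hε => hr₀ ε hε.2)
    (fun ε hε => by simpa [hB₀ ε hε.2] using (hθ₀ ε hε.2).le) S hS_mem hS_root hS
  obtain ⟨T, hTD, hT, rs, hrs⟩ := exists_isDeltaSystem (κ := lift.{w + 1} d) hdreg.lift
    (by simpa using hd) r₀ (A := Ico 1 d.ord)
    (by simpa using (mk_Ico_ord (one_lt_aleph0.trans hd) hd.le).ge)
  refine ⟨T, B, r₀, rs, fun ε hε => (hTD hε).2, hT, fun ε hε => ?_,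
    fun ζ hζ ε hε hζε γ₀ h₀ γ₁ h₁ => (hcross ζ (hTD hζ) ε (hTD hε) hζε γ₀ h₀ γ₁ h₁).trans
      (hrs hζ hε hζε.ne), hrs⟩
  obtain ⟨hBB₀ε, hBε⟩ := hBB₀ ε (hTD hε)
  exact ⟨hBB₀ε.trans (hB₀I ε (hTD hε).2), hBε.trans (hB₀ ε (hTD hε).2),
    (hr₀ ε (hTD hε).2).mono hBB₀ε⟩

theorem stmt2_general {α : Type} [DecidableEq α] (lam d : Cardinal.{0})
    (hcof : lam.ord.cof = d) (hd0 : ℵ₀ < d)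
    (u : Ordinal.{0} → Finset α)
    (θ : Ordinal.{0} → Cardinal.{0})
    (hmono : StrictMonoOn θ (Set.Iio d.ord))
    (hlt : ∀ ε < d.ord, θ ε < lam)
    (hcofin : ∀ c < lam, ∃ ε < d.ord, c < θ ε)
    (h1 : d < θ 1)
    (hreg : ∀ ε < d.ord, (θ (ε + 1)).IsRegular) :
    ∃ (B : Set Ordinal.{0}) (T : Set Ordinal.{0}) (r : Ordinal.{0} → Finset α)
      (rs : Finset α),
      B ⊆ Set.Iio lam.ord ∧ #B = Cardinal.lift.{1} lam ∧
      T ⊆ Set.Iio d.ord ∧ (∀ ε < d.ord, ∃ ζ ∈ T, ε ≤ ζ) ∧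
      (∀ ε ∈ T, ∀ γ₀ ∈ B, ∀ γ₁ ∈ B, γ₀ < γ₁ →
        γ₀ ∈ Set.Ico (θ ε).ord (θ (ε + 1)).ord → γ₁ ∈ Set.Ico (θ ε).ord (θ (ε + 1)).ord →
        u γ₀ ∩ u γ₁ = r ε) ∧
      (∀ ε ∈ T, ∀ ζ ∈ T, ε < ζ → ∀ γ₀ ∈ B, ∀ γ₁ ∈ B,
        γ₀ ∈ Set.Ico (θ ε).ord (θ (ε + 1)).ord → γ₁ ∈ Set.Ico (θ ζ).ord (θ (ζ + 1)).ord →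
        u γ₀ ∩ u γ₁ = rs) ∧
      (∀ ε₀ ∈ T, ∀ ε₁ ∈ T, ε₀ < ε₁ → r ε₀ ∩ r ε₁ = rs) ∧
      (∀ ε ∈ T, #(B ∩ Set.Ico (θ ε).ord (θ (ε + 1)).ord : Set Ordinal.{0}) =
        Cardinal.lift.{1} (θ (ε + 1))) := by
  have hsucc : ∀ ε < d.ord, ε + 1 < d.ord := fun ε => (isSuccLimit_ord hd0.le).add_one_lt
  have hdlam : d ≤ lam := hcof ▸ (Ordinal.cof_le_card lam.ord).trans_eq (card_ord lam)
  have hdreg : d.IsRegular := hcof ▸ isRegular_cof (isSuccLimit_ord (hd0.le.trans hdlam))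
  obtain ⟨T, B, r, rs, hT, hTcard, hB, hcross, hroots⟩ :=
    exists_deltaSystem_blocks hd0 hdreg u hmono h1 hreg
  have hunbdd : ∀ ε < d.ord, ∃ ζ ∈ T, ε ≤ ζ := fun ε =>
    Ordinal.exists_mem_le_of_lift_le_mk hTcard.ge
  have hBI : ∀ ε ∈ T, (⋃ ζ ∈ T, B ζ) ∩ Ico (θ ε).ord (θ (ε + 1)).ord = B ε := fun ε hε =>
    (hmono.monotoneOn.pairwiseDisjoint_Ico_ord.subset hT).biUnion_inter_eq
      (fun ζ hζ => (hB ζ hζ).1) hε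
  have hBlam : ⋃ ζ ∈ T, B ζ ⊆ Iio lam.ord := iUnion₂_subset fun ε hε γ hγ =>
    ((hB ε hε).1 hγ).2.trans_le (ord_le_ord.2 (hlt _ (hsucc ε (hT hε))).le)
  refine ⟨⋃ ζ ∈ T, B ζ, T, r, rs, hBlam, ?_, hT, hunbdd,
    fun ε hε γ₀ h₀ γ₁ h₁ hγ hI₀ hI₁ => (hB ε hε).2.2 (hBI ε hε ▸ ⟨h₀, hI₀⟩)
      (hBI ε hε ▸ ⟨h₁, hI₁⟩) hγ.ne,
    fun ε hε ζ hζ hεζ γ₀ h₀ γ₁ h₁ hI₀ hI₁ => hcross ε hε ζ hζ hεζ γ₀ (hBI ε hε ▸ ⟨h₀, hI₀⟩) γ₁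
      (hBI ζ hζ ▸ ⟨h₁, hI₁⟩),
    fun ζ hζ ε hε h => hroots hζ hε h.ne, fun ε hε => (hBI ε hε).symm ▸ (hB ε hε).2.1⟩
  refine le_antisymm (by simpa [mk_Iio_ordinal] using mk_le_mk_of_subset hBlam)
    (le_of_forall_lt fun c hc => ?_)
  obtain ⟨c, hclam, rfl⟩ := lt_lift_iff.1 hc
  obtain ⟨ε, hε, hcε⟩ := hcofin c hclam
  obtain ⟨ζ, hζ, hεζ⟩ := hunbdd ε hε
  calc lift.{1} c < lift.{1} (θ (ζ + 1)) := lift_lt.2 <| hcε.trans_le <|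
        hmono.monotoneOn hε (hsucc ζ (hT hζ)) (hεζ.trans (Order.le_succ ζ))
    _ = #(B ζ) := (hB ζ hζ).2.1.symm
    _ ≤ #(⋃ ζ ∈ T, B ζ) := mk_le_mk_of_subset (subset_biUnion_of_mem hζ)

theorem stmt2 {α : Type} [DecidableEq α] (lam d : Cardinal.{0})
    (hcof : lam.ord.cof = d) (hd0 : ℵ₀ < d) (hsing : d < lam)
    (u : Ordinal.{0} → Finset α)
    (θ : Ordinal.{0} → Cardinal.{0})
    (hmono : StrictMonoOn θ (Set.Iio d.ord))
    (hcont : ∀ ε < d.ord, Order.IsSuccLimit ε → θ ε = sSup (θ '' Set.Iio ε))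
    (hlt : ∀ ε < d.ord, θ ε < lam)
    (hcofin : ∀ c < lam, ∃ ε < d.ord, c < θ ε)
    (h0 : θ 0 = 0) (h1 : d < θ 1)
    (hreg : ∀ ε < d.ord, (θ (ε + 1)).IsRegular) :
    ∃ (B : Set Ordinal.{0}) (T : Set Ordinal.{0}) (r : Ordinal.{0} → Finset α)
      (rs : Finset α),
      B ⊆ Set.Iio lam.ord ∧ #B = Cardinal.lift.{1} lam ∧
      T ⊆ Set.Iio d.ord ∧ (∀ ε < d.ord, ∃ ζ ∈ T, ε ≤ ζ) ∧
      (∀ ε ∈ T, ∀ γ₀ ∈ B, ∀ γ₁ ∈ B, γ₀ < γ₁ →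
        γ₀ ∈ Set.Ico (θ ε).ord (θ (ε + 1)).ord → γ₁ ∈ Set.Ico (θ ε).ord (θ (ε + 1)).ord →
        u γ₀ ∩ u γ₁ = r ε) ∧
      (∀ ε ∈ T, ∀ ζ ∈ T, ε < ζ → ∀ γ₀ ∈ B, ∀ γ₁ ∈ B,
        γ₀ ∈ Set.Ico (θ ε).ord (θ (ε + 1)).ord → γ₁ ∈ Set.Ico (θ ζ).ord (θ (ζ + 1)).ord →
        u γ₀ ∩ u γ₁ = rs) ∧
      (∀ ε₀ ∈ T, ∀ ε₁ ∈ T, ε₀ < ε₁ → r ε₀ ∩ r ε₁ = rs) ∧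
      (∀ ε ∈ T, #(B ∩ Set.Ico (θ ε).ord (θ (ε + 1)).ord : Set Ordinal.{0}) =
        Cardinal.lift.{1} (θ (ε + 1))) :=
  stmt2_general lam d hcof hd0 u θ hmono hlt hcofin h1 hreg
end

section
/- If θ is an uncountable regular cardinal and F is a family of θ-many finite sets, then there exists a finite set r and a subfamily I ⊆ F with |I| = θ such that any two distinct members x, y of I satisfy x ∩ y = r. -/
open Cardinal

universe u v

/-!
Since `θ` has uncountable cofinality, `θ` many members of `F` have the same
size `n`; we induct on `n`. If some point `a` lies in `θ` many members, remove `a` from them,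
find a Δ-system among the results and put `a` back into its root. Otherwise every point lies in
fewer than `θ` members, and a maximal pairwise disjoint subfamily already has size `θ`: by
regularity, fewer than `θ` finite sets meet fewer than `θ` members in total, so a smaller
maximal subfamily could be extended.
-/

open Set

def HasDeltaSubfamily {α : Type u} [DecidableEq α] (θ : Cardinal.{u}) (G : Set (Finset α)) :
    Prop :=
  ∃ r : Finset α, ∃ I ⊆ G, #I = θ ∧ I.Pairwise (· ∩ · = r)

section DeltaSystem

variable {α : Type u} {θ : Cardinal.{u}}

theorem HasDeltaSubfamily.mono [DecidableEq α] {G H : Set (Finset α)} (hGH : G ⊆ H)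
    (hG : HasDeltaSubfamily θ G) : HasDeltaSubfamily θ H :=
  let ⟨r, I, hIG, hI⟩ := hG
  ⟨r, I, hIG.trans hGH, hI⟩

theorem card_eq_of_subset_of_le {β : Type u} {G H : Set β} (hGH : G ⊆ H) (hH : #H = θ)
    (hG : θ ≤ #G) : #G = θ :=
  le_antisymm ((mk_le_mk_of_subset hGH).trans_eq hH) hG

theorem HasDeltaSubfamily.of_image_erase [DecidableEq α] {a : α} {G : Set (Finset α)}
    (haG : ∀ s ∈ G, a ∈ s) (h : HasDeltaSubfamily θ ((·.erase a) '' G)) :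
    HasDeltaSubfamily θ G := by
  obtain ⟨r, I, hIG, hIθ, hIr⟩ := h
  have ha_notMem : ∀ t ∈ I, a ∉ t := by
    intro t ht
    obtain ⟨s, -, rfl⟩ := hIG ht
    exact Finset.notMem_erase a s
  have hinj : I.InjOn (insert a) := fun t ht t' ht' htt' => by
    rw [← Finset.erase_insert (ha_notMem t ht), htt', Finset.erase_insert (ha_notMem t' ht')]
  refine ⟨insert a r, insert a '' I, ?_, by rw [mk_image_eq_of_injOn _ _ hinj, hIθ], ?_⟩
  · rintro _ ⟨t, ht, rfl⟩
    obtain ⟨s, hs, rfl⟩ := hIG ht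
    rwa [Finset.insert_erase (haG s hs)]
  · refine hinj.pairwise_image.2 fun t ht t' ht' htt' => ?_
    rw [Function.onFun, ← Finset.insert_inter_distrib, hIr ht ht' htt']

theorem card_not_disjoint_lt (hreg : θ.IsRegular) {G M : Set (Finset α)} (hM : #M < θ)
    (hsmall : ∀ a : α, #{s ∈ G | a ∈ s} < θ) :
    #{s ∈ G | ∃ t ∈ M, ¬Disjoint t s} < θ := by
  have hsub : {s ∈ G | ∃ t ∈ M, ¬Disjoint t s} ⊆
      ⋃ p : Σ t : M, (t : Finset α), {s ∈ G | (p.2 : α) ∈ s} := by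
    rintro s ⟨hsG, t, htM, hts⟩
    obtain ⟨a, hat, has⟩ := Finset.not_disjoint_iff.1 hts
    exact mem_iUnion.2 ⟨⟨⟨t, htM⟩, ⟨a, hat⟩⟩, hsG, has⟩
  refine (mk_le_mk_of_subset hsub).trans_lt
    ((card_iUnion_lt_iff_forall_of_isRegular hreg ?_).2 fun p => hsmall p.2)
  rw [mk_sigma]
  exact sum_lt_of_isRegular hreg hM fun t => (lt_aleph0_of_finite _).trans_le hreg.aleph0_le

theorem exists_pairwise_disjoint_subfamily (hreg : θ.IsRegular) {G : Set (Finset α)}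
    (hG : #G = θ) (hsmall : ∀ a : α, #{s ∈ G | a ∈ s} < θ) :
    ∃ I ⊆ G, #I = θ ∧ I.Pairwise Disjoint := by
  obtain ⟨m, ⟨hmG, hm⟩, hmax⟩ := zorn_subset {I | I ⊆ G ∧ I.Pairwise Disjoint}
    fun c hc hchain => ⟨⋃₀ c, ⟨sUnion_subset fun I hI => (hc hI).1,
      (pairwise_sUnion hchain.directedOn).2 fun I hI => (hc hI).2⟩,
      fun _ => subset_sUnion_of_mem⟩
  refine ⟨m, hmG, card_eq_of_subset_of_le hmG hG (le_of_not_gt fun hmθ => ?_), hm⟩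
  set S := {s ∈ G | ∃ t ∈ m, ¬Disjoint t s}
  have hmS : #(m ∪ S : Set (Finset α)) < θ :=
    (mk_union_le m S).trans_lt
      (add_lt_of_lt hreg.aleph0_le hmθ (card_not_disjoint_lt hreg hmθ hsmall))
  obtain ⟨s, hsG, hsmS⟩ : (G \ (m ∪ S)).Nonempty :=
    sdiff_nonempty.2 fun hGmS => (hG ▸ mk_le_mk_of_subset hGmS).not_gt hmS
  have hs_disj : ∀ t ∈ m, Disjoint t s := fun t ht => by
    by_contra hts
    exact hsmS (Or.inr ⟨hsG, t, ht, hts⟩)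
  have hext : insert s m ∈ {I | I ⊆ G ∧ I.Pairwise Disjoint} :=
    ⟨insert_subset hsG hmG, hm.insert fun t ht _ => ⟨(hs_disj t ht).symm, hs_disj t ht⟩⟩
  exact hsmS (Or.inl (hmax hext (subset_insert s m) (mem_insert s m)))

theorem hasDeltaSubfamily_of_forall_card_le [DecidableEq α] (hreg : θ.IsRegular) (n : ℕ)
    {G : Set (Finset α)} (hGn : ∀ s ∈ G, s.card ≤ n) (hGθ : #G = θ) :
    HasDeltaSubfamily θ G := by
  induction n generalizing G with
  | zero =>
    have hG : G ⊆ {∅} := fun s hs => Finset.card_eq_zero.1 (Nat.le_zero.1 (hGn s hs))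
    exact absurd (hGθ ▸ (mk_le_mk_of_subset hG).trans_lt (lt_aleph0_of_finite _))
      hreg.aleph0_le.not_gt
  | succ n ih =>
    by_cases hbig : ∃ a : α, θ ≤ #{s ∈ G | a ∈ s}
    · obtain ⟨a, ha⟩ := hbig
      set Ga := {s ∈ G | a ∈ s}
      have hinj : Ga.InjOn (·.erase a) := fun s hs t ht hst => by
        dsimp only at hst
        rw [← Finset.insert_erase hs.2, hst, Finset.insert_erase ht.2]
      refine (HasDeltaSubfamily.of_image_erase (G := Ga) (fun s hs => hs.2) ?_).mono
        (sep_subset G _)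
      refine ih ?_ ?_
      · rintro _ ⟨s, hs, rfl⟩
        rw [Finset.card_erase_of_mem hs.2]
        exact Nat.sub_le_of_le_add (hGn s hs.1)
      · rw [mk_image_eq_of_injOn _ _ hinj]
        exact card_eq_of_subset_of_le (sep_subset G _) hGθ ha
    · simp only [not_exists, not_le] at hbig
      obtain ⟨I, hIG, hIθ, hI⟩ := exists_pairwise_disjoint_subfamily hreg hGθ hbig
      exact ⟨∅, I, hIG, hIθ, hI.mono' fun _ _ => Finset.disjoint_iff_inter_eq_empty.1⟩

end DeltaSystem

theorem stmt3 {α : Type u} [DecidableEq α] (θ : Cardinal.{u}) (hreg : θ.IsRegular) (hθ : ℵ₀ < θ)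
    (F : Set (Finset α)) (hF : #F = θ) :
    ∃ (r : Finset α) (I : Set (Finset α)), I ⊆ F ∧ #I = θ ∧
      ∀ x ∈ I, ∀ y ∈ I, x ≠ y → x ∩ y = r := by
  have hcof : #(ULift.{u} ℕ) < θ.ord.cof := by
    rwa [hreg.cof_ord, mk_uLift, mk_nat, lift_aleph0]
  obtain ⟨⟨n⟩, G, hGF, hθG, hGn⟩ := infinite_pigeonhole_set (fun s : F => ULift.up s.1.card) θ
    hF.ge hreg.aleph0_le hcof
  exact (hasDeltaSubfamily_of_forall_card_le hreg n (fun s hs => (congrArg ULift.down (hGn hs)).le)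
    (card_eq_of_subset_of_le hGF hF hθG)).mono hGF
end

section
/- Suppose κ = cf(κ), λ > cf(λ) = κ⁺ and λ^κ = λ. Then there exist a sequence ⟨B_i : i < κ⟩ of Boolean algebras and an ultrafilter D on κ such that ∏_{i<κ} Depth⁺(B_i)/D = λ < Depth⁺(∏_{i<κ} B_i / D) = λ⁺. -/
open Cardinal

universe u v

/-!
Let `b : κ⁺ → λ` be cofinal and let `B` be the finite–cofinite weak product of the powerset
algebras `𝒫(Iio (b ζ))`, `ζ < κ⁺`. A single factor carries chains of every length `< λ`. Along a
chain of length `λ` in `B`, since `cf λ > ℵ₀`, either the finite supports or the finite cosupports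
eventually stabilize, so a tail of the chain lives in a finite product of powersets of sets of size
`< λ`, which has no chain of length `λ`. Hence `Depth⁺(B) = λ`, and the ultrapower of the constant
`λ` has size `λ^κ = λ`.

In the ultrapower `B^κ / D` by a regular ultrafilter `D` on `κ`, choose finite sets `S ζ i ⊆ ζ`
such that for `ξ < ζ`, almost every `S ζ i` contains `ξ` and `S ξ i`. The element that is full on
`S ζ i` and equal to `{y ≤ t}` at `ζ` then increases along the lexicographic order of the pairs
`(ζ, t)`, `t < b ζ`, giving a chain of length `λ`. Conversely, by Łoś the ultrapower embeds
strictly monotonically into the powerset of `(Σ ζ, Iio (b ζ))^κ / D`, a set of size `λ^κ = λ`, so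
it has no chain of length `λ⁺`.
-/

open Set Filter

theorem Set.univ_sigma_injective {ι : Type*} {Y : ι → Type*} :
    Function.Injective fun t : ∀ i, Set (Y i) => (univ : Set ι).sigma t :=
  fun t t' h => funext fun i => by simpa using congr_arg (Sigma.mk i ⁻¹' ·) h

theorem Set.univ_sigma_strictMono {ι : Type*} {Y : ι → Type*} :
    StrictMono fun t : ∀ i, Set (Y i) => (univ : Set ι).sigma t :=
  Monotone.strictMono_of_injective (fun _ _ h => sigma_mono subset_rfl h) univ_sigma_injective

theorem Cardinal.mk_sigma_lt_of_lt_cof {ι : Type u} {Y : ι → Type u} {c : Cardinal.{u}}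
    (hc : ℵ₀ ≤ c) (hι : #ι < c.ord.cof) (hY : ∀ i, #(Y i) < c) : #(Σ i, Y i) < c := by
  rw [mk_sigma]
  exact (sum_le_mk_mul_iSup _).trans_lt
    (mul_lt_of_lt hc (hι.trans_le (Ordinal.cof_ord_le c)) (iSup_lt_of_lt_cof_ord hι hY))

theorem Cardinal.mk_sigma_le_of_le {ι : Type u} {Y : ι → Type u} {c : Cardinal.{u}}
    (hc : ℵ₀ ≤ c) (hι : #ι ≤ c) (hY : ∀ i, #(Y i) ≤ c) : #(Σ i, Y i) ≤ c := by
  rw [mk_sigma]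
  refine (sum_le_sum _ (fun _ => c) hY).trans ?_
  rw [sum_const']
  exact (mul_le_mul_left hι c).trans (mul_eq_self hc).le

theorem Cardinal.mk_Ici_toType {c : Cardinal.{u}} (hc : ℵ₀ ≤ c) (x : c.ord.ToType) :
    #(Ici x) = c := by
  have : Infinite c.ord.ToType := by rw [Cardinal.infinite_iff]; simpa
  rw [← compl_Iio, mk_compl_of_infinite _ (mk_Iio_lt x (by simp)), mk_ord_toType]

theorem Cardinal.exists_le_mk_Iio_toType {c θ : Cardinal.{u}} (h : θ < c) :
    ∃ t : c.ord.ToType, θ ≤ #(Iio t) := by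
  have hθ : θ.ord < Ordinal.type (α := c.ord.ToType) (· < ·) := by simpa using h
  refine ⟨Ordinal.enum (· < ·) ⟨θ.ord, hθ⟩, ?_⟩
  have := Ordinal.card_typein (α := c.ord.ToType) (r := (· < ·)) (Ordinal.enum (· < ·) ⟨θ.ord, hθ⟩)
  rw [Ordinal.typein_enum _ hθ, card_ord] at this
  exact this.le

theorem exists_cofinal_fun {α β : Type u} [LinearOrder α] [NoMaxOrder α] (h : #β = Order.cof α) :
    ∃ b : β → α, ∀ a, ∃ j, a < b j := by
  obtain ⟨s, hs, hcard⟩ := Order.exists_cof_eq α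
  obtain ⟨e⟩ := Cardinal.eq.1 (h.trans hcard.symm)
  refine ⟨fun j => e j, fun a => ?_⟩
  obtain ⟨a', ha'⟩ := exists_gt a
  obtain ⟨c, hc, hac⟩ := hs a'
  exact ⟨e.symm ⟨c, hc⟩, by simpa using ha'.trans_le hac⟩

section Chains

variable {α : Type u} [Preorder α]

theorem hasChain_of_strictMono {β : Type u} [LinearOrder β] [WellFoundedLT β] {g : β → α}
    (hg : StrictMono g) {θ : Cardinal.{u}} (hθ : θ ≤ #β) : HasChain α θ := by
  have : Ordinal.type (α := θ.ord.ToType) (· < ·) ≤ Ordinal.type (α := β) (· < ·) := by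
    rw [Ordinal.type_toType]
    exact (ord_le_ord.2 hθ).trans (ord_le_type _)
  obtain ⟨e⟩ := Ordinal.type_le_iff'.1 this
  exact ⟨g ∘ e, fun x y hxy => hg (e.map_rel_iff.2 hxy)⟩

theorem HasChain.mono {θ θ' : Cardinal.{u}} (h : HasChain α θ) (hθ : θ' ≤ θ) :
    HasChain α θ' := by
  obtain ⟨f, hf⟩ := h
  exact hasChain_of_strictMono hf (by rwa [mk_ord_toType])

theorem HasChain.map {β : Type u} [Preorder β] {θ : Cardinal.{u}} (h : HasChain α θ) {g : α → β}
    (hg : StrictMono g) : HasChain β θ :=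
  let ⟨f, hf⟩ := h
  ⟨g ∘ f, hg.comp hf⟩

theorem HasChain.le_mk {θ : Cardinal.{u}} (h : HasChain α θ) : θ ≤ #α := by
  obtain ⟨f, hf⟩ := h
  simpa using mk_le_of_injective hf.injective

theorem hasChain_zero : HasChain α 0 := by
  have : IsEmpty (0 : Cardinal.{u}).ord.ToType := by simp
  exact ⟨isEmptyElim, isEmptyElim⟩

theorem succ_le_depthPlus {θ : Cardinal.{u}} (h : HasChain α θ) : Order.succ θ ≤ DepthPlus α := by
  refine le_csSup ⟨Order.succ #α, ?_⟩ ⟨θ, rfl, h⟩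
  rintro _ ⟨θ, rfl, hθ⟩
  exact Order.succ_le_succ (HasChain.le_mk hθ)

theorem depthPlus_le {c : Cardinal.{u}} (h : ∀ θ, HasChain α θ → Order.succ θ ≤ c) :
    DepthPlus α ≤ c := by
  refine csSup_le ⟨_, 0, rfl, hasChain_zero⟩ ?_
  rintro _ ⟨θ, rfl, hθ⟩
  exact h θ hθ

theorem depthPlus_eq {lam : Cardinal.{u}} (h : ∀ θ < lam, HasChain α θ) (h' : ¬ HasChain α lam) :
    DepthPlus α = lam := by
  refine le_antisymm (depthPlus_le fun θ hθ => Order.succ_le_of_lt ?_) ?_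
  · exact lt_of_not_ge fun hle => h' (hθ.mono hle)
  · exact le_of_forall_lt fun c hc => (Order.lt_succ c).trans_le (succ_le_depthPlus (h c hc))

theorem depthPlus_eq_succ {lam : Cardinal.{u}} (h : HasChain α lam)
    (h' : ∀ θ, HasChain α θ → θ ≤ lam) : DepthPlus α = Order.succ lam :=
  le_antisymm (depthPlus_le fun θ hθ => Order.succ_le_succ (h' θ hθ)) (succ_le_depthPlus h)

theorem hasChain_set (Y : Type u) : HasChain (Set Y) #Y := by
  obtain ⟨e⟩ := Cardinal.eq.1 (mk_ord_toType #Y)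
  exact ⟨image e ∘ Iic, e.injective.image_strictMono.comp fun _ _ h => Iic_ssubset_Iic.2 h⟩

/-- Each step `f x ⊂ f (succ x)` adds a new point, and these points are pairwise distinct. -/
theorem mk_le_of_strictMono_set {β Z : Type u} [LinearOrder β] [SuccOrder β] [NoMaxOrder β]
    {f : β → Set Z} (hf : StrictMono f) : #β ≤ #Z := by
  choose w hw using fun x => exists_of_ssubset (hf (Order.lt_succ x))
  refine mk_le_of_injective (f := w) (Function.Injective.of_lt_imp_ne fun x y hxy hxy' => ?_)
  exact (hw y).2 (hf.monotone (Order.succ_le_of_lt hxy) (hxy' ▸ (hw x).1))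

theorem HasChain.le_mk_of_set {Z : Type u} {θ : Cardinal.{u}} (h : HasChain (Set Z) θ)
    (hθ : ℵ₀ ≤ θ) : θ ≤ #Z := by
  obtain ⟨f, hf⟩ := h
  have := Cardinal.noMaxOrder hθ
  simpa using mk_le_of_strictMono_set hf

end Chains

namespace UltraProd

variable {ι : Type u} {D : Ultrafilter ι}

theorem mk_surjective {B : ι → Type v} : Function.Surjective (UltraProd.mk D B) :=
  Quotient.mk_surjective

theorem mk_eq_mk {B : ι → Type v} {f g : ∀ i, B i} :
    UltraProd.mk D B f = UltraProd.mk D B g ↔ ∀ᶠ i in D, f i = g i :=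
  Quotient.eq

section Order

variable {B : ι → Type v} [∀ i, PartialOrder (B i)] {f g : ∀ i, B i}

theorem mk_le_mk : UltraProd.mk D B f ≤ UltraProd.mk D B g ↔ ∀ᶠ i in D, f i ≤ g i :=
  Iff.rfl

theorem mk_lt_mk : UltraProd.mk D B f < UltraProd.mk D B g ↔ ∀ᶠ i in D, f i < g i := by
  simp only [lt_iff_le_not_ge, mk_le_mk, ← Ultrafilter.eventually_not, ← eventually_and]

/-- Łoś: `[g] ↦ {[p] | p i ∈ f i (g i) for D-almost all i}` is strictly monotone. -/
theorem exists_strictMono_set {Z : Type v} (f : ∀ i, B i → Set Z) (hf : ∀ i, StrictMono (f i)) :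
    ∃ F : UltraProd D B → Set (UltraProd D fun _ => Z), StrictMono F := by
  let F : UltraProd D B → Set (UltraProd D fun _ => Z) :=
    Quotient.lift (fun g => UltraProd.mk D _ '' {p | ∀ᶠ i in D, p i ∈ f i (g i)})
      fun g g' (h : ∀ᶠ i in D, g i = g' i) => by
        congr 1
        ext p
        refine ⟨fun hp => ?_, fun hp => ?_⟩ <;> filter_upwards [hp, h] with i hp hi
        · rwa [← hi]
        · rwa [hi]
  refine ⟨F, fun x y hxy => ?_⟩
  obtain ⟨g, rfl⟩ := mk_surjective x
  obtain ⟨h, rfl⟩ := mk_surjective y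
  have hlt : ∀ᶠ i in D, f i (g i) < f i (h i) := by
    filter_upwards [mk_lt_mk.1 hxy] with i hi using hf i hi
  refine lt_of_le_not_ge ?_ fun hsub => ?_
  · rintro _ ⟨p, hp, rfl⟩
    refine ⟨p, ?_, rfl⟩
    filter_upwards [hp, hlt] with i hp hi using hi.le hp
  · obtain ⟨i₀, hi₀⟩ := hlt.exists
    obtain ⟨z₀, -⟩ := exists_of_ssubset hi₀
    have hwit : ∀ i, ∃ z, f i (g i) < f i (h i) → z ∈ f i (h i) ∧ z ∉ f i (g i) := fun i => by
      by_cases hi : f i (g i) < f i (h i)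
      · exact (exists_of_ssubset hi).imp fun _ hz _ => hz
      · exact ⟨z₀, fun hi' => absurd hi' hi⟩
    choose p hp using hwit
    obtain ⟨p', hp', hpp'⟩ := hsub ⟨p, by filter_upwards [hlt] with i hi using (hp i hi).1, rfl⟩
    obtain ⟨i, hi, hi', hpi⟩ := (hlt.and (hp'.and (mk_eq_mk.1 hpp'))).exists
    exact (hp i hi).2 (hpi ▸ hi')

end Order

theorem mk_le_of_le_of_power_eq {Z : Type u} {c : Cardinal.{u}} (hZ : #Z ≤ c) (hc : c ^ #ι = c) :
    #(UltraProd D fun _ => Z) ≤ c :=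
  calc #(UltraProd D fun _ => Z) ≤ #(ι → Z) := mk_le_of_surjective mk_surjective
    _ = #Z ^ #ι := (power_def _ _).symm
    _ ≤ c := hc ▸ power_le_power_right hZ

theorem mk_le_mk_const (Z : Type u) : #Z ≤ #(UltraProd D fun _ => Z) := by
  refine mk_le_of_injective (f := fun z => UltraProd.mk D _ fun _ => z) fun z z' h => ?_
  obtain ⟨_, hz⟩ := (mk_eq_mk.1 h).exists
  exact hz

end UltraProd

theorem ultraprodCard_const {ι : Type u} (D : Ultrafilter ι) {c : Cardinal.{u}} (hc : c ^ #ι = c) :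
    ultraprodCard D (fun _ => c) = c :=
  le_antisymm (UltraProd.mk_le_of_le_of_power_eq (mk_ord_toType c).le hc)
    ((mk_ord_toType c).symm.trans_le (UltraProd.mk_le_mk_const _))

def weakPi {ι : Type*} (A : ι → Type*) [∀ i, BooleanAlgebra (A i)] :
    BooleanSubalgebra (∀ i, A i) where
  carrier := {x | (∀ᶠ i in cofinite, x i = ⊥) ∨ ∀ᶠ i in cofinite, x i = ⊤}
  supClosed' := by
    rintro x (hx | hx) y (hy | hy)
    · exact .inl (by filter_upwards [hx, hy] with i hx hy; simp [hx, hy])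
    · exact .inr (by filter_upwards [hy] with i hy; simp [hy])
    all_goals exact .inr (by filter_upwards [hx] with i hx; simp [hx])
  infClosed' := by
    rintro x (hx | hx) y (hy | hy)
    · exact .inl (by filter_upwards [hx] with i hx; simp [hx])
    · exact .inl (by filter_upwards [hx] with i hx; simp [hx])
    · exact .inl (by filter_upwards [hy] with i hy; simp [hy])
    · exact .inr (by filter_upwards [hx, hy] with i hx hy; simp [hx, hy])
  compl_mem' := by
    rintro x (hx | hx)
    · exact .inr (by filter_upwards [hx] with i hx; simp [hx])
    · exact .inl (by filter_upwards [hx] with i hx; simp [hx])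
  bot_mem' := .inl (.of_forall fun _ => rfl)

section WeakPi

variable {ι : Type u} {A : ι → Type u} [∀ i, BooleanAlgebra (A i)]

theorem update_bot_mem_weakPi [DecidableEq ι] (j : ι) (a : A j) :
    Function.update ⊥ j a ∈ weakPi A :=
  .inl (by filter_upwards [eventually_cofinite_ne j] with i hi using
    Function.update_of_ne hi _ _)

theorem HasChain.weakPi {j : ι} {θ : Cardinal.{u}} (h : HasChain (A j) θ) :
    HasChain (weakPi A) θ := by
  classical
  exact h.map (g := fun a => ⟨_, update_bot_mem_weakPi j a⟩)
    fun _ _ hab => Function.update_strictMono hab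

end WeakPi

section Stabilization

variable {α β : Type*} [LinearOrder α] [Nonempty α] {s : α → Set β}

/-- The cardinalities `(s x).ncard` are bounded since countable subsets of `α` are bounded. -/
theorem exists_forall_ge_eq_of_monotone_of_finite (hα : ℵ₀ < Order.cof α) (hs : Monotone s)
    (hfin : ∀ x, (s x).Finite) : ∃ a, ∀ x, a ≤ x → s x = s a := by
  have hbdd : BddAbove (range fun x => (s x).ncard) := by
    by_contra h
    have : ∀ n : ℕ, ∃ x, n < (s x).ncard := by simpa [not_bddAbove_iff] using h
    choose g hg using this
    obtain ⟨a, ha⟩ : ∃ a, ∀ n, g n < a := by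
      have : ¬ IsCofinal (range g) := fun hc => (hα.trans_le (Order.cof_le hc)).not_ge
        (mk_le_aleph0_iff.2 (countable_range g).to_subtype)
      simpa [IsCofinal] using this
    exact (hg (s a).ncard).not_ge (ncard_le_ncard (hs (ha _).le) (hfin a))
  obtain ⟨a, ha⟩ := Nat.sSup_mem (range_nonempty _) hbdd
  refine ⟨a, fun x hax => (eq_of_subset_of_ncard_le (hs hax) ?_ (hfin x)).symm⟩
  rw [show (s a).ncard = _ from ha]
  exact le_csSup hbdd ⟨x, rfl⟩

theorem exists_forall_ge_eq_of_antitone_of_finite (hs : Antitone s) (hfin : ∀ x, (s x).Finite) :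
    ∃ a, ∀ x, a ≤ x → s x = s a := by
  obtain ⟨_, ⟨a, rfl⟩, ha⟩ :=
    wellFounded_lt.has_min (range fun x => (s x).ncard) (range_nonempty _)
  exact ⟨a, fun x hax =>
    eq_of_subset_of_ncard_le (hs hax) (not_lt.1 (ha _ ⟨x, rfl⟩)) (hfin a)⟩

end Stabilization

section WeakPiChains

variable {ι : Type u} {A : ι → Type u} [∀ i, BooleanAlgebra (A i)]

/-- The finite supports stabilize, or, once some value has infinite support, the finite cosupports
do. -/
theorem exists_finite_forall_ge_eq_of_monotone {α : Type*} [LinearOrder α] [Nonempty α]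
    (hα : ℵ₀ < Order.cof α) {f : α → weakPi A} (hf : Monotone f) :
    ∃ a, ∃ u : Set ι, u.Finite ∧
      ∀ x, a ≤ x → ∀ i ∉ u, (f x : ∀ i, A i) i = (f a : ∀ i, A i) i := by
  by_cases hfin : ∀ x, {i | (f x : ∀ i, A i) i ≠ ⊥}.Finite
  · obtain ⟨a, ha⟩ := exists_forall_ge_eq_of_monotone_of_finite hα
      (s := fun x => {i | (f x : ∀ i, A i) i ≠ ⊥})
      (fun x y hxy _ hi => ne_bot_of_le_ne_bot hi (hf hxy _)) hfin
    refine ⟨a, _, hfin a, fun x hx i hi => ?_⟩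
    have hi' : i ∉ {i | (f x : ∀ i, A i) i ≠ ⊥} := ha x hx ▸ hi
    simp only [mem_ofPred_eq, not_not] at hi hi'
    rw [hi, hi']
  · push Not at hfin
    obtain ⟨x₀, hx₀⟩ := hfin
    have hcofin : ∀ x, x₀ ≤ x → {i | (f x : ∀ i, A i) i ≠ ⊤}.Finite := fun x hx =>
      eventually_cofinite.1 <| (f x).2.resolve_left fun hbot => hx₀ <|
        (eventually_cofinite.1 hbot).subset fun _ hi hbot => hi (le_bot_iff.1 (hbot ▸ hf hx _))
    obtain ⟨a, ha⟩ := exists_forall_ge_eq_of_antitone_of_finite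
      (s := fun x => {i | (f (max x x₀) : ∀ i, A i) i ≠ ⊤})
      (fun x y hxy _ hi => ne_top_of_le_ne_top hi (hf (max_le_max_right x₀ hxy) _))
      fun x => hcofin _ (le_max_right x x₀)
    have hsupp : ∀ x, max a x₀ ≤ x →
        {i | (f x : ∀ i, A i) i ≠ ⊤} = {i | (f (max a x₀) : ∀ i, A i) i ≠ ⊤} := fun x hx => by
      simpa [max_eq_left ((le_max_right a x₀).trans hx)] using ha x ((le_max_left a x₀).trans hx)
    refine ⟨max a x₀, _, hcofin _ (le_max_right a x₀), fun x hx i hi => ?_⟩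
    have hi' : i ∉ {i | (f x : ∀ i, A i) i ≠ ⊤} := hsupp x hx ▸ hi
    simp only [mem_ofPred_eq, not_not] at hi hi'
    rw [hi, hi']

/-- On a tail of the chain all but finitely many coordinates are frozen, so the tail is a chain in
a powerset of fewer than `lam` points. -/
theorem not_hasChain_weakPi_set {Y : ι → Type u} {lam : Cardinal.{u}} (hcof : ℵ₀ < lam.ord.cof)
    (hY : ∀ i, #(Y i) < lam) : ¬ HasChain (weakPi fun i => Set (Y i)) lam := by
  rintro ⟨f, hf⟩
  have hlam : ℵ₀ ≤ lam := hcof.le.trans (Ordinal.cof_ord_le lam)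
  have := Cardinal.noMaxOrder hlam
  have : Nonempty lam.ord.ToType := by
    rw [← mk_ne_zero_iff, mk_ord_toType]
    exact (aleph0_pos.trans_le hlam).ne'
  obtain ⟨a, u, hu, ha⟩ :=
    exists_finite_forall_ge_eq_of_monotone (by rwa [Ordinal.cof_toType]) hf.monotone
  let r : Ici a → ∀ i : u, Set (Y i) := fun x i => (f x : ∀ i, Set (Y i)) i
  have hr : StrictMono r := by
    refine Monotone.strictMono_of_injective (fun x y hxy i => hf.monotone hxy i) fun x y hxy => ?_
    refine Subtype.ext (hf.injective (Subtype.ext (funext fun i => ?_)))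
    by_cases hi : i ∈ u
    · exact congr_fun hxy ⟨i, hi⟩
    · rw [ha x x.2 i hi, ha y y.2 i hi]
  have hle := mk_le_of_strictMono_set (univ_sigma_strictMono.comp hr)
  rw [mk_Ici_toType hlam] at hle
  exact hle.not_gt (mk_sigma_lt_of_lt_cof hlam (hu.lt_aleph0.trans hcof) fun i => hY i)

theorem depthPlus_weakPi_set {Y : ι → Type u} {lam : Cardinal.{u}} (hcof : ℵ₀ < lam.ord.cof)
    (hY : ∀ i, #(Y i) < lam) (hsup : ∀ θ < lam, ∃ i, θ ≤ #(Y i)) :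
    DepthPlus (weakPi fun i => Set (Y i)) = lam := by
  refine depthPlus_eq (fun θ hθ => ?_) (not_hasChain_weakPi_set hcof hY)
  obtain ⟨i, hi⟩ := hsup θ hθ
  exact ((hasChain_set (Y i)).mono hi).weakPi

end WeakPiChains

theorem Ultrafilter.exists_isRegular (ι : Type u) [Infinite ι] :
    ∃ D : Ultrafilter ι, D.IsRegular := by
  obtain ⟨E⟩ : Nonempty (ι ≃ Finset ι) := Cardinal.eq.1 (mk_finset_of_infinite ι).symm
  refine ⟨.of (Filter.map E.symm atTop), E, fun ζ => Ultrafilter.of_le _ ?_⟩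
  simpa using eventually_ge_atTop ({ζ} : Finset ι)

/-- `S ζ i` is defined by recursion on `ζ` as the union of `insert ξ (S ξ i)` over the finitely many
`ξ < ζ` sent into the regularity witness `W i` by a fixed embedding `Iio ζ ↪ ι`. -/
theorem exists_coherent_finsets {ι P : Type u} [LinearOrder P] [WellFoundedLT P]
    {D : Ultrafilter ι} (hD : D.IsRegular) (hP : ∀ ζ : P, #(Iio ζ) ≤ #ι) :
    ∃ S : P → ι → Finset P, (∀ ζ i, ∀ ξ ∈ S ζ i, ξ < ζ) ∧
      ∀ ξ ζ, ξ < ζ → ∀ᶠ i in D, ξ ∈ S ζ i ∧ S ξ i ⊆ S ζ i := by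
  obtain ⟨W, hW⟩ := hD
  have e : ∀ ζ : P, Iio ζ ↪ ι := fun ζ => Classical.choice ((Cardinal.le_def _ _).1 (hP ζ))
  let A (ζ : P) (i : ι) : Finset (Iio ζ) := (W i).preimage (e ζ) (e ζ).injective.injOn
  let S : P → ι → Finset P :=
    WellFoundedLT.fix fun ζ S i => (A ζ i).biUnion fun ξ => insert ξ.1 (S ξ.1 ξ.2 i)
  have hS (ζ : P) (i : ι) : S ζ i = (A ζ i).biUnion fun ξ => insert ξ.1 (S ξ.1 i) := by
    simp only [S]
    rw [WellFoundedLT.fix_eq]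
  refine ⟨S, fun ζ => ?_, fun ξ ζ hξ => ?_⟩
  · induction ζ using WellFoundedLT.induction with
    | _ ζ ih =>
      intro i ξ hξ
      rw [hS] at hξ
      obtain ⟨η, -, hη⟩ := Finset.mem_biUnion.1 hξ
      rcases Finset.mem_insert.1 hη with rfl | hη
      · exact η.2
      · exact (ih η η.2 i ξ hη).trans η.2
  · filter_upwards [hW (e ζ ⟨ξ, hξ⟩)] with i hi
    have hsub : insert ξ (S ξ i) ⊆ S ζ i := by
      rw [hS ζ i]
      exact Finset.subset_biUnion_of_mem (fun η : Iio ζ => insert η.1 (S η.1 i))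
        (Finset.mem_preimage.2 hi)
    exact ⟨hsub (Finset.mem_insert_self _ _), (Finset.subset_insert _ _).trans hsub⟩

section LongChain

variable {ι P T : Type u} [LinearOrder P] [LinearOrder T] (b : P → T) (S : P → ι → Finset P)

def chainElem (ζ : P) (t : T) (i : ι) : ∀ ξ, Set (Iio (b ξ)) :=
  Function.update (fun ξ => if ξ ∈ S ζ i then univ else ∅) ζ {y | (y : T) ≤ t}

variable {b S}

theorem chainElem_mem (ζ : P) (t : T) (i : ι) :
    chainElem b S ζ t i ∈ weakPi fun ξ => Set (Iio (b ξ)) := by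
  refine .inl ?_
  filter_upwards [(insert ζ (S ζ i)).finite_toSet.eventually_cofinite_notMem] with ξ hξ
  simp only [Finset.coe_insert, mem_insert_iff, Finset.mem_coe, not_or] at hξ
  simp [chainElem, Function.update_of_ne hξ.1, hξ.2]

theorem chainElem_lt_chainElem_of_lt {ζ : P} {t t' : T} (h : t < t') (ht' : t' < b ζ) (i : ι) :
    chainElem b S ζ t i < chainElem b S ζ t' i := by
  refine Function.update_strictMono ((ssubset_iff_of_subset fun y hy => ?_).2 ⟨⟨t', ht'⟩, ?_⟩)
  · exact le_trans hy h.le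
  · simpa using h

theorem chainElem_lt_chainElem_of_mem {ξ ζ : P} {i : ι} (hξζ : ξ < ζ) (hSξ : ∀ η ∈ S ξ i, η < ξ)
    (hmem : ξ ∈ S ζ i) (hsub : S ξ i ⊆ S ζ i) (t : T) {t' : T} (ht' : t' < b ζ) :
    chainElem b S ξ t i < chainElem b S ζ t' i := by
  refine lt_of_le_of_ne (fun η => ?_) fun h => ?_
  · rcases eq_or_ne η ξ with rfl | hηξ
    · simp [chainElem, hξζ.ne, hmem]
    · rw [chainElem, Function.update_of_ne hηξ]
      split_ifs with hη
      · simp [chainElem, ((hSξ η hη).trans hξζ).ne, hsub hη]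
      · exact empty_subset _
  · have hζ : ζ ∉ S ξ i := fun hζ => (hSξ ζ hζ).not_gt hξζ
    have := congr_fun h ζ
    simp only [chainElem, Function.update_self, Function.update_of_ne hξζ.ne', hζ,
      if_false] at this
    exact this.symm.subset (show ⟨t', ht'⟩ ∈ {y : Iio (b ζ) | (y : T) ≤ t'} from le_rfl)

/-- The points `(ζ, t)` with `t < b ζ`, in lexicographic order, form a chain in the ultraproduct:
for `ξ < ζ` the coherence of `S` makes `chainElem ξ t i < chainElem ζ t' i` for almost all `i`. -/
theorem hasChain_ultraProd_weakPi [WellFoundedLT P] [WellFoundedLT T] {D : Ultrafilter ι}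
    (hD : D.IsRegular) (hP : ∀ ζ : P, #(Iio ζ) ≤ #ι) (hb : ∀ t, ∃ ζ, t < b ζ) :
    HasChain (UltraProd D fun _ => weakPi fun ξ => Set (Iio (b ξ))) #T := by
  obtain ⟨S, hSlt, hS⟩ := exists_coherent_finsets hD hP
  let Φ (p : {p : P ×ₗ T // (ofLex p).2 < b (ofLex p).1}) :
      UltraProd D fun _ => weakPi fun ξ => Set (Iio (b ξ)) :=
    UltraProd.mk D _ fun i => ⟨_, chainElem_mem (S := S) (ofLex p.1).1 (ofLex p.1).2 i⟩
  refine hasChain_of_strictMono (g := Φ) ?_ ?_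
  · rintro ⟨⟨ξ, t⟩, ht⟩ ⟨⟨ζ, t'⟩, ht'⟩ hlt
    refine UltraProd.mk_lt_mk.2 ?_
    rcases Prod.Lex.toLex_lt_toLex.1 hlt with h | ⟨rfl, h⟩
    · filter_upwards [hS ξ ζ h] with i hi
      exact chainElem_lt_chainElem_of_mem h (hSlt ξ i) hi.1 hi.2 t ht'
    · exact .of_forall fun i => chainElem_lt_chainElem_of_lt h ht' i
  · choose ζ hζ using hb
    exact mk_le_of_injective (f := fun t => ⟨toLex (ζ t, t), hζ t⟩) fun t t' h =>
      congr_arg (fun p : {p : P ×ₗ T // (ofLex p).2 < b (ofLex p).1} => (ofLex p.1).2) h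

end LongChain

theorem le_mk_ultraProd_sigma_of_hasChain {ι P : Type u} {D : Ultrafilter ι} {Y : P → Type u}
    {θ : Cardinal.{u}} (h : HasChain (UltraProd D fun _ => weakPi fun ζ => Set (Y ζ)) θ)
    (hθ : ℵ₀ ≤ θ) : θ ≤ #(UltraProd D fun _ => Σ ζ, Y ζ) := by
  obtain ⟨F, hF⟩ := UltraProd.exists_strictMono_set (D := D)
    (fun _ (x : weakPi fun ζ => Set (Y ζ)) => (univ : Set P).sigma (x : ∀ ζ, Set (Y ζ)))
    fun _ => univ_sigma_strictMono.comp (Subtype.strictMono_coe _)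
  exact (h.map hF).le_mk_of_set hθ

theorem depthPlus_weakPi_Iio {P : Type u} {lam : Cardinal.{u}} (hcof : ℵ₀ < lam.ord.cof)
    {b : P → lam.ord.ToType} (hb : ∀ t, ∃ ζ, t < b ζ) :
    DepthPlus (weakPi fun ζ => Set (Iio (b ζ))) = lam := by
  refine depthPlus_weakPi_set hcof (fun ζ => by simpa using mk_Iio_lt (b ζ) (by simp))
    fun θ hθ => ?_
  obtain ⟨t, ht⟩ := exists_le_mk_Iio_toType hθ
  obtain ⟨ζ, hζ⟩ := hb t
  exact ⟨ζ, ht.trans (mk_le_mk_of_subset (Iio_subset_Iio hζ.le))⟩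

theorem stmt7_general (κ lam : Cardinal.{0}) (hκ : κ.IsRegular)
    (hcof : lam.ord.cof = Order.succ κ)
    (hpow : lam ^ κ = lam) :
    ∃ (B : κ.ord.ToType → Type) (_ : ∀ i, BooleanAlgebra (B i))
      (D : Ultrafilter κ.ord.ToType),
      ultraprodCard D (fun i => DepthPlus (B i)) = lam ∧
      DepthPlus (UltraProd D B) = Order.succ lam := by
  have hcof₀ : ℵ₀ < lam.ord.cof := hcof ▸ hκ.aleph0_le.trans_lt (Order.lt_succ κ)
  have hlam : ℵ₀ ≤ lam := hcof₀.le.trans (Ordinal.cof_ord_le lam)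
  have := Cardinal.noMaxOrder hlam
  have : Infinite κ.ord.ToType := by rw [Cardinal.infinite_iff, mk_ord_toType]; exact hκ.aleph0_le
  have hpow' : lam ^ #κ.ord.ToType = lam := by rwa [mk_ord_toType]
  obtain ⟨b, hb⟩ := exists_cofinal_fun (α := lam.ord.ToType) (β := (Order.succ κ).ord.ToType)
    (by rw [mk_ord_toType, Ordinal.cof_toType, hcof])
  obtain ⟨D, hD⟩ := Ultrafilter.exists_isRegular κ.ord.ToType
  refine ⟨fun _ => weakPi fun ζ => Set (Iio (b ζ)), fun _ => inferInstance, D, ?_, ?_⟩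
  · simp only [depthPlus_weakPi_Iio hcof₀ hb]
    exact ultraprodCard_const D hpow'
  · refine depthPlus_eq_succ ?_ fun θ hθ => ?_
    · simpa using hasChain_ultraProd_weakPi hD
        (fun ζ => by simpa [Order.lt_succ_iff] using mk_Iio_lt ζ (by simp)) hb
    · rcases lt_or_ge θ ℵ₀ with hθ' | hθ'
      · exact hθ'.le.trans hlam
      · have hsigma : #(Σ ζ, Iio (b ζ)) ≤ lam := mk_sigma_le_of_le hlam
          (by simpa [← hcof] using Ordinal.cof_ord_le lam) fun ζ => (mk_set_le _).trans (by simp)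
        exact (le_mk_ultraProd_sigma_of_hasChain hθ hθ').trans
          (UltraProd.mk_le_of_le_of_power_eq hsigma hpow')

theorem stmt7 (κ lam : Cardinal.{0}) (hκ : κ.IsRegular)
    (hcof : lam.ord.cof = Order.succ κ) (hsing : Order.succ κ < lam)
    (hpow : lam ^ κ = lam) :
    ∃ (B : κ.ord.ToType → Type) (_ : ∀ i, BooleanAlgebra (B i))
      (D : Ultrafilter κ.ord.ToType),
      ultraprodCard D (fun i => DepthPlus (B i)) = lam ∧
      DepthPlus (UltraProd D B) = Order.succ lam :=
  stmt7_general κ lam hκ hcof hpow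
end
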